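/- Assume the Bregman PDMM setup (see context) with the mirror-averaging optimality conditions, primal optimality conditions and dual updates holding at every iteration t ∈ ℕ, parameters satisfying 0 < γ < μσ and τ ≤ ρ(μσ − γ), and a KKT point (x*, ν*) as in the context. Let T ≥ 1, define x̄_i^T = (1/T) Σ_{t=1}^T x_i^t, and V(0) = (1/(2τρ)) Σ_i ‖ν*_i − ν_i^0‖_2² + Σ_i B_φ(x*, y_i^0) + Σ_i (δ_i/ρ) B_{φ_i}(x*, x_i^0). Then (1/2) Σ_{i=1}^m ‖x̄_i^T − Σ_{j=1}^m P_{ij} x̄_j^T‖_2² ≤ V(0)/(γT). -/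

import Mathlib

/-!
Along the iterates, the Lyapunov function
`V(t) = 1/(2τρ) Σᵢ ‖ν*ᵢ - νᵢᵗ‖² + Σᵢ B_φ(x*, yᵢᵗ) + Σᵢ (δᵢ/ρ) B_{φᵢ}(x*, xᵢᵗ)`
decreases by at least `γ/2` times the consensus residual `Σᵢ ‖xᵢᵗ⁺¹ - Σⱼ Pᵢⱼ xⱼᵗ⁺¹‖²`.
Comparing the primal optimality condition with the KKT condition (monotonicity of the
subdifferential of `fᵢ` plus the indicator of `𝒳`) and applying the three-point identity of
Bregman divergences controls the Bregman terms up to a dual cross term; the dual update turns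
this cross term into the change of the `ν`-distance minus `τ/(2ρ)` times the residual. The
mirror-averaging step, strong convexity (`‖·‖_p² ≥ σ ‖·‖₂²`) and the contraction
`‖P w‖² ≤ ⟪w, P w⟫` of a symmetric positive semidefinite stochastic matrix give back `μσ/2`
times the residual, and `τ ≤ ρ(μσ - γ)` leaves `γ/2` of it. Telescoping, and convexity of
`‖·‖²` applied to the (linear) residual of the ergodic averages, give the `1/T` rate.
-/

open scoped RealInnerProductSpace BigOperators

/-- The Bregman divergence `B_φ(u,v) = φ(u) − φ(v) − ⟨∇φ(v), u − v⟩`. -/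
noncomputable def breg {n : ℕ} (φ : EuclideanSpace ℝ (Fin n) → ℝ)
    (u v : EuclideanSpace ℝ (Fin n)) : ℝ :=
  φ u - φ v - ⟪gradient φ v, u - v⟫

/-- The ℓ_p norm on ℝ^n: `‖w‖_p = (Σ_k |w_k|^p)^(1/p)`. -/
noncomputable def lpnorm {n : ℕ} (p : ℝ) (w : EuclideanSpace ℝ (Fin n)) : ℝ :=
  (∑ k, |w k| ^ p) ^ (1 / p)

open Finset

lemma ConvexOn.add_inner_gradient_le {F : Type*} [NormedAddCommGroup F] [InnerProductSpace ℝ F]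
    [CompleteSpace F] {f : F → ℝ} (hc : ConvexOn ℝ Set.univ f) {v : F}
    (hd : DifferentiableAt ℝ f v) (u : F) : f v + ⟪gradient f v, u - v⟫ ≤ f u := by
  set ℓ : ℝ →ᵃ[ℝ] F := AffineMap.lineMap v u
  have hline : ConvexOn ℝ Set.univ (f ∘ ℓ) := by
    simpa using hc.comp_affineMap ℓ
  have hderiv : HasDerivAt (f ∘ ℓ) ⟪gradient f v, u - v⟫ 0 := by
    have := (AffineMap.lineMap_apply_zero v u (k := ℝ)).symm ▸ hd.hasFDerivAt
    simpa [gradient, InnerProductSpace.toDual_symm_apply] using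
      this.comp_hasDerivAt (0 : ℝ) AffineMap.hasDerivAt_lineMap
  have := hline.le_slope_of_hasDerivAt (Set.mem_univ 0) (Set.mem_univ 1) zero_lt_one hderiv
  simp only [slope_def_field, Function.comp_apply, ℓ, AffineMap.lineMap_apply_one,
    AffineMap.lineMap_apply_zero, sub_zero, div_one] at this
  linarith

lemma inner_sub_nonneg_of_constrained_optimality {E : Type*} [NormedAddCommGroup E]
    [InnerProductSpace ℝ E] {f : E → ℝ} {X : Set E} {a b h h' : E} (ha : a ∈ X) (hb : b ∈ X)
    (hfa : ∃ g, (∀ v ∈ X, 0 ≤ ⟪g, a - v⟫) ∧ ∀ v, f v ≥ f a + ⟪h - g, v - a⟫)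
    (hfb : ∃ g, (∀ v ∈ X, 0 ≤ ⟪g, b - v⟫) ∧ ∀ v, f v ≥ f b + ⟪h' - g, v - b⟫) :
    0 ≤ ⟪h - h', a - b⟫ := by
  obtain ⟨g, hgX, hga⟩ := hfa
  obtain ⟨g', hg'X, hg'b⟩ := hfb
  have h1 := hga b
  have h2 := hg'b a
  have h3 := hgX b hb
  have h4 := hg'X a ha
  rw [← neg_sub a b] at h1 h4
  simp only [inner_neg_right, inner_sub_left, inner_sub_right] at h1 h2 h3 h4 ⊢
  linarith

section Bregman

variable {n : ℕ}

lemma breg_nonneg {φ : EuclideanSpace ℝ (Fin n) → ℝ} (hc : ConvexOn ℝ Set.univ φ)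
    (hd : Differentiable ℝ φ) (u v : EuclideanSpace ℝ (Fin n)) : 0 ≤ breg φ u v := by
  have := hc.add_inner_gradient_le (hd v) u
  rw [breg]
  linarith

lemma inner_gradient_sub_gradient_eq_breg (φ : EuclideanSpace ℝ (Fin n) → ℝ)
    (a b c : EuclideanSpace ℝ (Fin n)) :
    ⟪gradient φ b - gradient φ c, b - a⟫ = breg φ a b + breg φ b c - breg φ a c := by
  simp only [breg, inner_sub_left, inner_sub_right]
  ring

end Bregman

section PowerSums

variable {ι : Type*}

lemma sum_rpow_le_rpow_sum {s : Finset ι} {a : ι → ℝ} (ha : ∀ i ∈ s, 0 ≤ a i) {q : ℝ}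
    (hq : 1 ≤ q) : ∑ i ∈ s, a i ^ q ≤ (∑ i ∈ s, a i) ^ q := by
  have hS : 0 ≤ ∑ i ∈ s, a i := sum_nonneg ha
  have split : ∀ b : ℝ, 0 ≤ b → b ^ q = b * b ^ (q - 1) := fun b hb => by
    rw [← Real.rpow_one_add' hb (by linarith), add_sub_cancel]
  calc ∑ i ∈ s, a i ^ q ≤ ∑ i ∈ s, a i * (∑ i ∈ s, a i) ^ (q - 1) :=
        sum_le_sum fun i hi => by
          rw [split _ (ha i hi)]
          exact mul_le_mul_of_nonneg_left (Real.rpow_le_rpow (ha i hi)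
            (single_le_sum ha hi) (by linarith)) (ha i hi)
    _ = (∑ i ∈ s, a i) ^ q := by rw [← sum_mul, ← split _ hS]

variable [Fintype ι]

lemma sum_sq_le_rpow_sum_rpow_of_le_two {p : ℝ} (hp : 0 < p) (hp2 : p ≤ 2) (w : ι → ℝ) :
    ∑ k, w k ^ 2 ≤ (∑ k, |w k| ^ p) ^ (2 / p) := by
  have hpow : ∀ k, w k ^ 2 = (|w k| ^ p) ^ (2 / p) := fun k => by
    rw [← Real.rpow_mul (abs_nonneg _), mul_div_cancel₀ _ hp.ne', ← sq_abs]
    exact_mod_cast (Real.rpow_natCast _ 2).symm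
  simp_rw [hpow]
  exact sum_rpow_le_rpow_sum (fun k _ => Real.rpow_nonneg (abs_nonneg _) _)
    ((one_le_div hp).mpr hp2)

lemma card_rpow_mul_sum_sq_le_rpow_sum_rpow {p : ℝ} (hp2 : 2 ≤ p) (w : ι → ℝ) :
    (Fintype.card ι : ℝ) ^ (2 / p - 1) * ∑ k, w k ^ 2 ≤ (∑ k, |w k| ^ p) ^ (2 / p) := by
  rcases isEmpty_or_nonempty ι with hι | hι
  · simp [Real.rpow_nonneg]
  have hp : 0 < p := by linarith
  have hn : (0 : ℝ) < Fintype.card ι := by exact_mod_cast Fintype.card_pos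
  have hpow : ∀ k, (w k ^ 2) ^ (p / 2) = |w k| ^ p := fun k => by
    rw [← sq_abs, ← Real.rpow_natCast, ← Real.rpow_mul (abs_nonneg _)]
    norm_num
    field_simp
  have power_mean := Real.rpow_sum_le_const_mul_sum_rpow_of_nonneg (s := univ)
    (f := fun k => w k ^ 2) (by linarith : 1 ≤ p / 2) (fun k _ => sq_nonneg _)
  simp only [hpow, card_univ] at power_mean
  have hSp : 0 ≤ ∑ k, |w k| ^ p := sum_nonneg fun k _ => Real.rpow_nonneg (abs_nonneg _) _
  have h2 := Real.rpow_le_rpow (Real.rpow_nonneg (sum_nonneg fun k _ => sq_nonneg (w k)) _)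
    power_mean (by positivity : 0 ≤ 2 / p)
  rw [← Real.rpow_mul (sum_nonneg fun k _ => sq_nonneg (w k)), Real.mul_rpow
    (Real.rpow_nonneg hn.le _) hSp, ← Real.rpow_mul hn.le,
    show p / 2 * (2 / p) = 1 by field_simp, Real.rpow_one] at h2
  calc (Fintype.card ι : ℝ) ^ (2 / p - 1) * ∑ k, w k ^ 2
      ≤ (Fintype.card ι : ℝ) ^ (2 / p - 1) *
          ((Fintype.card ι : ℝ) ^ ((p / 2 - 1) * (2 / p)) * (∑ k, |w k| ^ p) ^ (2 / p)) :=
        mul_le_mul_of_nonneg_left h2 (by positivity)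
    _ = (∑ k, |w k| ^ p) ^ (2 / p) := by
        rw [← mul_assoc, ← Real.rpow_add hn, show 2 / p - 1 + (p / 2 - 1) * (2 / p) = 0 by
          field_simp; ring, Real.rpow_zero, one_mul]

lemma min_one_card_rpow_mul_sum_sq_le {p : ℝ} (hp : 1 ≤ p) (w : ι → ℝ) :
    min 1 ((Fintype.card ι : ℝ) ^ (2 / p - 1)) * ∑ k, w k ^ 2
      ≤ (∑ k, |w k| ^ p) ^ (2 / p) := by
  have hsq : 0 ≤ ∑ k, w k ^ 2 := sum_nonneg fun k _ => sq_nonneg _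
  rcases le_total p 2 with hp2 | hp2
  · calc min 1 ((Fintype.card ι : ℝ) ^ (2 / p - 1)) * ∑ k, w k ^ 2 ≤ 1 * ∑ k, w k ^ 2 :=
          mul_le_mul_of_nonneg_right (min_le_left _ _) hsq
      _ ≤ _ := (one_mul _).trans_le (sum_sq_le_rpow_sum_rpow_of_le_two (by linarith) hp2 w)
  · exact (mul_le_mul_of_nonneg_right (min_le_right _ _) hsq).trans
      (card_rpow_mul_sum_sq_le_rpow_sum_rpow hp2 w)

end PowerSums

lemma min_one_rpow_mul_norm_sq_le_lpnorm_sq {n : ℕ} {p : ℝ} (hp : 1 ≤ p)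
    (w : EuclideanSpace ℝ (Fin n)) :
    min 1 ((n : ℝ) ^ (2 / p - 1)) * ‖w‖ ^ 2 ≤ lpnorm p w ^ 2 := by
  have hS : 0 ≤ ∑ k, |w k| ^ p := sum_nonneg fun k _ => Real.rpow_nonneg (abs_nonneg _) _
  rw [EuclideanSpace.real_norm_sq_eq, lpnorm, ← Real.rpow_natCast, ← Real.rpow_mul hS,
    Nat.cast_ofNat, one_div_mul_eq_div]
  simpa using min_one_card_rpow_mul_sum_sq_le hp (fun k => w k)

lemma sum_mul_norm_sub_sq_eq {ι E : Type*} [NormedAddCommGroup E] [InnerProductSpace ℝ E]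
    {s : Finset ι} {w : ι → ℝ} (hw : ∑ j ∈ s, w j = 1) (z : E) (a : ι → E) :
    ∑ j ∈ s, w j * ‖z - a j‖ ^ 2
      = ‖z - ∑ j ∈ s, w j • a j‖ ^ 2 + ∑ j ∈ s, w j * ‖a j‖ ^ 2 - ‖∑ j ∈ s, w j • a j‖ ^ 2 := by
  simp_rw [norm_sub_sq_real, inner_sum, real_inner_smul_right, mul_add, mul_sub,
    sum_add_distrib, sum_sub_distrib, ← sum_mul, hw, mul_sum, mul_left_comm (w _)]
  ring

section SymmetricStochastic

variable {ι : Type*} [Fintype ι] {P : Matrix ι ι ℝ}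
variable {E : Type*} [NormedAddCommGroup E] [InnerProductSpace ℝ E]

lemma sum_apply_eq_one_of_isSymm (hPsym : P.IsSymm) (hProw : ∀ i, ∑ j, P i j = 1) (j : ι) :
    ∑ i, P i j = 1 := by
  simpa only [hPsym.apply] using hProw j

lemma sum_sum_mul_eq_sum_of_isSymm (hPsym : P.IsSymm) (hProw : ∀ i, ∑ j, P i j = 1)
    (a : ι → ℝ) : ∑ i, ∑ j, P i j * a j = ∑ j, a j := by
  rw [sum_comm]
  refine sum_congr rfl fun j _ => ?_
  rw [← sum_mul, sum_apply_eq_one_of_isSymm hPsym hProw, one_mul]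

lemma sum_inner_sum_smul_comm (hPsym : P.IsSymm) (a b : ι → E) :
    ∑ i, ⟪∑ j, P i j • a j, b i⟫ = ∑ i, ⟪a i, ∑ j, P i j • b j⟫ := by
  simp_rw [sum_inner, inner_sum, real_inner_smul_left, real_inner_smul_right]
  rw [sum_comm]
  exact sum_congr rfl fun i _ => sum_congr rfl fun j _ => by
    rw [hPsym.apply i j, real_inner_comm]

lemma sum_smul_sum_smul (A B : Matrix ι ι ℝ) (c : ι → E) (i : ι) :
    ∑ k, A i k • ∑ j, B k j • c j = ∑ j, (A * B) i j • c j := by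
  simp_rw [Matrix.mul_apply, smul_sum, smul_smul, sum_smul]
  exact sum_comm

lemma sum_inner_sum_smul_le_sum_norm_sq (hPsym : P.IsSymm) (hPnn : ∀ i j, 0 ≤ P i j)
    (hProw : ∀ i, ∑ j, P i j = 1) (u : ι → E) :
    ∑ i, ⟪u i, ∑ j, P i j • u j⟫ ≤ ∑ i, ‖u i‖ ^ 2 := by
  have amgm : ∀ i j, P i j * ⟪u i, u j⟫ ≤ P i j * (‖u i‖ ^ 2 / 2) + P i j * (‖u j‖ ^ 2 / 2) := by
    intro i j
    rw [← mul_add]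
    refine mul_le_mul_of_nonneg_left ?_ (hPnn i j)
    nlinarith [real_inner_le_norm (u i) (u j), sq_nonneg (‖u i‖ - ‖u j‖)]
  calc ∑ i, ⟪u i, ∑ j, P i j • u j⟫ = ∑ i, ∑ j, P i j * ⟪u i, u j⟫ := by
        simp_rw [inner_sum, real_inner_smul_right]
    _ ≤ ∑ i, ∑ j, (P i j * (‖u i‖ ^ 2 / 2) + P i j * (‖u j‖ ^ 2 / 2)) :=
        sum_le_sum fun i _ => sum_le_sum fun j _ => amgm i j
    _ = ∑ i, ‖u i‖ ^ 2 := by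
        rw [sum_congr rfl fun i _ => sum_add_distrib, sum_add_distrib,
          sum_sum_mul_eq_sum_of_isSymm hPsym hProw]
        simp_rw [← sum_mul, hProw, one_mul, ← sum_add_distrib, add_halves]

open scoped MatrixOrder in
lemma Matrix.PosSemidef.exists_isSymm_mul_self_eq (hP : P.PosSemidef) :
    ∃ R : Matrix ι ι ℝ, R.IsSymm ∧ R * R = P := by
  classical
  exact ⟨CFC.sqrt P, Matrix.isHermitian_iff_isSymm.mp
    (Matrix.nonneg_iff_posSemidef.mp (CFC.sqrt_nonneg P)).isHermitian,
    CFC.sqrt_mul_sqrt_self P hP.nonneg⟩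

lemma sum_norm_sum_smul_sq_le_sum_inner (hPsym : P.IsSymm) (hPnn : ∀ i j, 0 ≤ P i j)
    (hProw : ∀ i, ∑ j, P i j = 1) (hPpsd : P.PosSemidef) (u : ι → E) :
    ∑ i, ‖∑ j, P i j • u j‖ ^ 2 ≤ ∑ i, ⟪u i, ∑ j, P i j • u j⟫ := by
  -- with `R = √P` and `v = R u`, the two sides are `⟪v, P v⟫` and `‖v‖²`
  obtain ⟨R, hRsym, rfl⟩ := hPpsd.exists_isSymm_mul_self_eq
  set v : ι → E := fun k => ∑ j, R k j • u j
  calc ∑ i, ‖∑ j, (R * R) i j • u j‖ ^ 2 = ∑ i, ⟪∑ k, R i k • v k, ∑ k, R i k • v k⟫ := by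
        simp_rw [real_inner_self_eq_norm_sq, v, sum_smul_sum_smul]
    _ = ∑ i, ⟪v i, ∑ j, (R * R) i j • v j⟫ := by
        rw [sum_inner_sum_smul_comm hRsym]
        simp_rw [sum_smul_sum_smul]
    _ ≤ ∑ i, ‖v i‖ ^ 2 := sum_inner_sum_smul_le_sum_norm_sq hPsym hPnn hProw v
    _ = ∑ i, ⟪u i, ∑ j, (R * R) i j • u j⟫ := by
        simp_rw [← real_inner_self_eq_norm_sq, ← sum_smul_sum_smul]
        exact sum_inner_sum_smul_comm hRsym u v

lemma sum_norm_sub_sum_smul_sq_le (hPsym : P.IsSymm) (hPnn : ∀ i j, 0 ≤ P i j)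
    (hProw : ∀ i, ∑ j, P i j = 1) (hPpsd : P.PosSemidef) (z w : ι → E) :
    ∑ i, ‖w i - ∑ j, P i j • w j‖ ^ 2 ≤ ∑ i, ∑ j, P i j * ‖z i - w j‖ ^ 2 := by
  set c : ι → E := fun i => ∑ j, P i j • w j
  have hcontract := sum_norm_sum_smul_sq_le_sum_inner hPsym hPnn hProw hPpsd w
  have hdist : 0 ≤ ∑ i, ‖z i - c i‖ ^ 2 := sum_nonneg fun i _ => sq_nonneg _
  calc ∑ i, ‖w i - c i‖ ^ 2 = ∑ i, ‖w i‖ ^ 2 - 2 * ∑ i, ⟪w i, c i⟫ + ∑ i, ‖c i‖ ^ 2 := by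
        simp_rw [norm_sub_sq_real, sum_add_distrib, sum_sub_distrib, mul_sum]
    _ ≤ ∑ i, ‖z i - c i‖ ^ 2 + ∑ i, ‖w i‖ ^ 2 - ∑ i, ‖c i‖ ^ 2 := by linarith
    _ = ∑ i, ∑ j, P i j * ‖z i - w j‖ ^ 2 := by
        simp_rw [sum_mul_norm_sub_sq_eq (hProw _), sum_sub_distrib, sum_add_distrib]
        rw [sum_sum_mul_eq_sum_of_isSymm hPsym hProw]

lemma sum_inner_sub_sum_smul_eq (hPsym : P.IsSymm) (hProw : ∀ i, ∑ j, P i j = 1)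
    (e x : ι → E) (x₀ : E) :
    ∑ i, ⟪e i - ∑ j, P i j • e j, x i - x₀⟫ = ∑ i, ⟪e i, x i - ∑ j, P i j • x j⟫ := by
  have hshift : ∀ i, ∑ j, P i j • (x j - x₀) = ∑ j, P i j • x j - x₀ := fun i => by
    rw [sum_congr rfl fun j _ => smul_sub (P i j) (x j) x₀, sum_sub_distrib, ← sum_smul,
      hProw i, one_smul]
  calc ∑ i, ⟪e i - ∑ j, P i j • e j, x i - x₀⟫
      = ∑ i, ⟪e i, x i - x₀⟫ - ∑ i, ⟪∑ j, P i j • e j, x i - x₀⟫ := by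
        simp_rw [inner_sub_left, sum_sub_distrib]
    _ = ∑ i, ⟪e i, x i - x₀⟫ - ∑ i, ⟪e i, ∑ j, P i j • (x j - x₀)⟫ := by
        rw [sum_inner_sum_smul_comm hPsym e (fun i => x i - x₀)]
    _ = ∑ i, ⟪e i, x i - ∑ j, P i j • x j⟫ := by
        simp_rw [hshift, ← sum_sub_distrib, ← inner_sub_right, sub_sub_sub_cancel_right]

end SymmetricStochastic

section PDMM

variable {ι : Type*} [Fintype ι] {n : ℕ}

noncomputable def pdmmLyapunov (φ : EuclideanSpace ℝ (Fin n) → ℝ)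
    (φi : ι → EuclideanSpace ℝ (Fin n) → ℝ) (δ : ι → ℝ) (ρ τ : ℝ)
    (xstar : EuclideanSpace ℝ (Fin n)) (νstar : ι → EuclideanSpace ℝ (Fin n))
    (x y ν : ℕ → ι → EuclideanSpace ℝ (Fin n)) (t : ℕ) : ℝ :=
  1 / (2 * τ * ρ) * ∑ i, ‖νstar i - ν t i‖ ^ 2
    + (∑ i, breg φ xstar (y t i))
    + ∑ i, δ i / ρ * breg (φi i) xstar (x t i)

variable {P : Matrix ι ι ℝ} {X : Set (EuclideanSpace ℝ (Fin n))}
  {φ : EuclideanSpace ℝ (Fin n) → ℝ}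

lemma pdmmLyapunov_nonneg {φi : ι → EuclideanSpace ℝ (Fin n) → ℝ} {δ : ι → ℝ} {ρ τ : ℝ}
    (hφc : ConvexOn ℝ Set.univ φ) (hφd : Differentiable ℝ φ)
    (hφic : ∀ i, ConvexOn ℝ Set.univ (φi i)) (hφid : ∀ i, Differentiable ℝ (φi i))
    (hρ : 0 < ρ) (hτ : 0 < τ) (hδ : ∀ i, 0 ≤ δ i) (xstar : EuclideanSpace ℝ (Fin n))
    (νstar : ι → EuclideanSpace ℝ (Fin n)) (x y ν : ℕ → ι → EuclideanSpace ℝ (Fin n)) (t : ℕ) :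
    0 ≤ pdmmLyapunov φ φi δ ρ τ xstar νstar x y ν t := by
  have h1 : 0 ≤ ∑ i, breg φ xstar (y t i) := sum_nonneg fun i _ => breg_nonneg hφc hφd _ _
  have h2 : 0 ≤ ∑ i, δ i / ρ * breg (φi i) xstar (x t i) := sum_nonneg fun i _ =>
    mul_nonneg (div_nonneg (hδ i) hρ.le) (breg_nonneg (hφic i) (hφid i) _ _)
  unfold pdmmLyapunov
  positivity

lemma sum_inner_residual_add_breg_le {f φi : ι → EuclideanSpace ℝ (Fin n) → ℝ} {ρ : ℝ}
    {δ : ι → ℝ} (hPsym : P.IsSymm) (hProw : ∀ i, ∑ j, P i j = 1)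
    (hφc : ConvexOn ℝ Set.univ φ) (hφd : Differentiable ℝ φ)
    (hφic : ∀ i, ConvexOn ℝ Set.univ (φi i)) (hφid : ∀ i, Differentiable ℝ (φi i))
    (hρ : 0 ≤ ρ) (hδ : ∀ i, 0 ≤ δ i)
    {x x' y ν νstar : ι → EuclideanSpace ℝ (Fin n)} {xstar : EuclideanSpace ℝ (Fin n)}
    (hx'X : ∀ i, x' i ∈ X) (hxstar : xstar ∈ X)
    (hprimal : ∀ i, ∃ g : EuclideanSpace ℝ (Fin n),
      (∀ v ∈ X, 0 ≤ ⟪g, x' i - v⟫) ∧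
      ∀ v, f i v ≥ f i (x' i) +
        ⟪-ν i + (∑ j, P i j • ν j)
            - ρ • (gradient φ (x' i) - gradient φ (y i))
            - δ i • (gradient (φi i) (x' i) - gradient (φi i) (x i))
            - g, v - x' i⟫)
    (hkkt : ∀ i, ∃ g : EuclideanSpace ℝ (Fin n),
      (∀ v ∈ X, 0 ≤ ⟪g, xstar - v⟫) ∧
      ∀ v, f i v ≥ f i xstar + ⟪-νstar i + (∑ j, P i j • νstar j) - g, v - xstar⟫) :
    ∑ i, ⟪ν i - νstar i, x' i - ∑ j, P i j • x' j⟫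
      + ρ * (∑ i, breg φ xstar (x' i) - ∑ i, breg φ xstar (y i))
      + (∑ i, δ i * breg (φi i) xstar (x' i) - ∑ i, δ i * breg (φi i) xstar (x i)) ≤ 0 := by
  set e : ι → EuclideanSpace ℝ (Fin n) := fun i => ν i - νstar i
  have hagent : ∀ i, ⟪e i - ∑ j, P i j • e j, x' i - xstar⟫
      + ρ * (breg φ xstar (x' i) - breg φ xstar (y i))
      + (δ i * breg (φi i) xstar (x' i) - δ i * breg (φi i) xstar (x i)) ≤ 0 := fun i => by
    have h : 0 ≤ ⟪-(e i - ∑ j, P i j • e j) - ρ • (gradient φ (x' i) - gradient φ (y i))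
        - δ i • (gradient (φi i) (x' i) - gradient (φi i) (x i)), x' i - xstar⟫ := by
      convert inner_sub_nonneg_of_constrained_optimality (hx'X i) hxstar (hprimal i) (hkkt i)
        using 2
      simp only [e, smul_sub, sum_sub_distrib]
      abel
    rw [inner_sub_left, inner_sub_left, inner_neg_left, real_inner_smul_left,
      real_inner_smul_left, inner_gradient_sub_gradient_eq_breg,
      inner_gradient_sub_gradient_eq_breg] at h
    linarith [mul_nonneg hρ (breg_nonneg hφc hφd (x' i) (y i)),
      mul_nonneg (hδ i) (breg_nonneg (hφic i) (hφid i) (x' i) (x i))]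
  have hsum := sum_nonpos fun i (_ : i ∈ univ) => hagent i
  rw [sum_add_distrib, sum_add_distrib, sum_inner_sub_sum_smul_eq hPsym hProw, ← mul_sum,
    sum_sub_distrib, sum_sub_distrib] at hsum
  exact hsum

lemma sum_breg_add_mul_sum_norm_sq_le (hPsym : P.IsSymm) (hPnn : ∀ i j, 0 ≤ P i j)
    (hProw : ∀ i, ∑ j, P i j = 1) (hPpsd : P.PosSemidef) {κ : ℝ} (hκ : 0 ≤ κ)
    (hsc : ∀ u ∈ X, ∀ v ∈ X, κ / 2 * ‖u - v‖ ^ 2 ≤ breg φ u v)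
    {x y : ι → EuclideanSpace ℝ (Fin n)} {xstar : EuclideanSpace ℝ (Fin n)}
    (hxX : ∀ i, x i ∈ X) (hyX : ∀ i, y i ∈ X) (hxstar : xstar ∈ X)
    (hmirror : ∀ i, ∀ u ∈ X, 0 ≤ ∑ j, P i j * ⟪gradient φ (y i) - gradient φ (x j), u - y i⟫) :
    ∑ i, breg φ xstar (y i) + κ / 2 * ∑ i, ‖x i - ∑ j, P i j • x j‖ ^ 2
      ≤ ∑ i, breg φ xstar (x i) := by
  have hagent : ∀ i, breg φ xstar (y i) + ∑ j, P i j * breg φ (y i) (x j)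
      ≤ ∑ j, P i j * breg φ xstar (x j) := fun i => by
    have h := hmirror i xstar hxstar
    simp_rw [← neg_sub (y i) xstar, inner_neg_right, inner_gradient_sub_gradient_eq_breg] at h
    simp_rw [mul_neg, sum_neg_distrib, mul_sub, mul_add, sum_sub_distrib, sum_add_distrib,
      ← sum_mul, hProw i, one_mul] at h
    linarith
  have hstrong : κ / 2 * ∑ i, ∑ j, P i j * ‖y i - x j‖ ^ 2
      ≤ ∑ i, ∑ j, P i j * breg φ (y i) (x j) := by
    simp_rw [mul_sum, mul_left_comm (κ / 2)]
    exact sum_le_sum fun i _ => sum_le_sum fun j _ =>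
      mul_le_mul_of_nonneg_left (hsc _ (hyX i) _ (hxX j)) (hPnn i j)
  have hconsensus := mul_le_mul_of_nonneg_left
    (sum_norm_sub_sum_smul_sq_le hPsym hPnn hProw hPpsd y x) (by positivity : 0 ≤ κ / 2)
  have hsum := sum_le_sum fun i (_ : i ∈ univ) => hagent i
  rw [sum_add_distrib, sum_sum_mul_eq_sum_of_isSymm hPsym hProw] at hsum
  linarith

lemma pdmmLyapunov_succ_add_le {f φi : ι → EuclideanSpace ℝ (Fin n) → ℝ} {δ : ι → ℝ}
    {ρ τ κ γ : ℝ} (hPsym : P.IsSymm) (hPnn : ∀ i j, 0 ≤ P i j) (hProw : ∀ i, ∑ j, P i j = 1)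
    (hPpsd : P.PosSemidef) (hφc : ConvexOn ℝ Set.univ φ) (hφd : Differentiable ℝ φ)
    (hφic : ∀ i, ConvexOn ℝ Set.univ (φi i)) (hφid : ∀ i, Differentiable ℝ (φi i))
    (hρ : 0 < ρ) (hτ : 0 < τ) (hδ : ∀ i, 0 ≤ δ i) (hκ : 0 ≤ κ) (hτρ : τ ≤ ρ * (κ - γ))
    (hsc : ∀ u ∈ X, ∀ v ∈ X, κ / 2 * ‖u - v‖ ^ 2 ≤ breg φ u v)
    {x y ν : ℕ → ι → EuclideanSpace ℝ (Fin n)} {xstar : EuclideanSpace ℝ (Fin n)}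
    {νstar : ι → EuclideanSpace ℝ (Fin n)} {t : ℕ}
    (hxX : ∀ i, x (t + 1) i ∈ X) (hyX : ∀ i, y (t + 1) i ∈ X) (hxstar : xstar ∈ X)
    (hmirror : ∀ i, ∀ u ∈ X,
      0 ≤ ∑ j, P i j * ⟪gradient φ (y (t + 1) i) - gradient φ (x (t + 1) j), u - y (t + 1) i⟫)
    (hprimal : ∀ i, ∃ g : EuclideanSpace ℝ (Fin n),
      (∀ v ∈ X, 0 ≤ ⟪g, x (t + 1) i - v⟫) ∧
      ∀ v, f i v ≥ f i (x (t + 1) i) +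
        ⟪-ν t i + (∑ j, P i j • ν t j)
            - ρ • (gradient φ (x (t + 1) i) - gradient φ (y t i))
            - δ i • (gradient (φi i) (x (t + 1) i) - gradient (φi i) (x t i))
            - g, v - x (t + 1) i⟫)
    (hdual : ∀ i, ν (t + 1) i = ν t i + τ • (x (t + 1) i - ∑ j, P i j • x (t + 1) j))
    (hkkt : ∀ i, ∃ g : EuclideanSpace ℝ (Fin n),
      (∀ v ∈ X, 0 ≤ ⟪g, xstar - v⟫) ∧
      ∀ v, f i v ≥ f i xstar + ⟪-νstar i + (∑ j, P i j • νstar j) - g, v - xstar⟫) :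
    pdmmLyapunov φ φi δ ρ τ xstar νstar x y ν (t + 1)
        + γ / 2 * ∑ i, ‖x (t + 1) i - ∑ j, P i j • x (t + 1) j‖ ^ 2
      ≤ pdmmLyapunov φ φi δ ρ τ xstar νstar x y ν t := by
  set r : ι → EuclideanSpace ℝ (Fin n) := fun i => x (t + 1) i - ∑ j, P i j • x (t + 1) j
  change _ + γ / 2 * ∑ i, ‖r i‖ ^ 2 ≤ _
  have hprimal_sum := sum_inner_residual_add_breg_le hPsym hProw hφc hφd hφic hφid hρ.le hδ
    hxX hxstar hprimal hkkt
  have hmirror_sum :=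
    sum_breg_add_mul_sum_norm_sq_le hPsym hPnn hProw hPpsd hκ hsc hxX hyX hxstar hmirror
  have hdual_sum : ∑ i, ‖νstar i - ν (t + 1) i‖ ^ 2
      = ∑ i, ‖νstar i - ν t i‖ ^ 2 + 2 * τ * ∑ i, ⟪ν t i - νstar i, r i⟫
        + τ ^ 2 * ∑ i, ‖r i‖ ^ 2 := by
    simp_rw [mul_sum, ← sum_add_distrib]
    refine sum_congr rfl fun i _ => ?_
    rw [hdual i, ← norm_neg, neg_sub, add_sub_right_comm, norm_add_sq_real, norm_smul,
      real_inner_smul_right, ← norm_neg (νstar i - ν t i), neg_sub, mul_pow, Real.norm_eq_abs,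
      sq_abs]
    ring
  have hr : 0 ≤ ∑ i, ‖r i‖ ^ 2 := sum_nonneg fun i _ => sq_nonneg _
  simp_rw [pdmmLyapunov, div_mul_eq_mul_div _ ρ, ← sum_div, hdual_sum]
  have key : ∑ i, ⟪ν t i - νstar i, r i⟫ + τ / 2 * ∑ i, ‖r i‖ ^ 2
      + ρ * (∑ i, breg φ xstar (y (t + 1) i) - ∑ i, breg φ xstar (y t i))
      + (∑ i, δ i * breg (φi i) xstar (x (t + 1) i) - ∑ i, δ i * breg (φi i) xstar (x t i))
      + ρ * γ / 2 * ∑ i, ‖r i‖ ^ 2 ≤ 0 := by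
    linarith [mul_le_mul_of_nonneg_left hmirror_sum hρ.le, mul_le_mul_of_nonneg_right hτρ hr]
  have hτ0 := hτ.ne'
  have hρ0 := hρ.ne'
  rw [← sub_nonpos]
  refine Eq.trans_le ?_ (div_nonpos_of_nonpos_of_nonneg key hρ.le)
  field_simp
  ring

end PDMM

lemma sum_Icc_le_of_succ_add_le {L a : ℕ → ℝ} (hL : ∀ t, 0 ≤ L t)
    (h : ∀ t, L (t + 1) + a (t + 1) ≤ L t) (T : ℕ) : ∑ t ∈ Icc 1 T, a t ≤ L 0 := by
  suffices ∀ T, L T + ∑ t ∈ Icc 1 T, a t ≤ L 0 by linarith [this T, hL T]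
  intro T
  induction T with
  | zero => simp
  | succ T ih =>
    rw [sum_Icc_succ_top (Nat.le_add_left 1 T)]
    linarith [h T]

lemma norm_inv_card_smul_sum_sq_le {κ E : Type*} [SeminormedAddCommGroup E] [NormedSpace ℝ E]
    (s : Finset κ) (v : κ → E) :
    ‖(1 / (#s : ℝ)) • ∑ t ∈ s, v t‖ ^ 2 ≤ 1 / (#s : ℝ) * ∑ t ∈ s, ‖v t‖ ^ 2 := by
  have hcs : (1 / (#s : ℝ)) ^ 2 * #s = 1 / #s := by
    rcases eq_or_ne (#s : ℝ) 0 with h | h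
    · simp [h]
    · field_simp
  calc ‖(1 / (#s : ℝ)) • ∑ t ∈ s, v t‖ ^ 2 ≤ (1 / (#s : ℝ)) ^ 2 * (∑ t ∈ s, ‖v t‖) ^ 2 := by
        rw [norm_smul, mul_pow, Real.norm_of_nonneg (by positivity)]
        gcongr
        exact norm_sum_le s v
    _ ≤ (1 / (#s : ℝ)) ^ 2 * (#s * ∑ t ∈ s, ‖v t‖ ^ 2) := by
        gcongr
        exact sq_sum_le_card_mul_sum_sq
    _ = 1 / (#s : ℝ) * ∑ t ∈ s, ‖v t‖ ^ 2 := by rw [← mul_assoc, hcs]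

lemma sum_norm_average_sub_sum_smul_sq_le {κ ι E : Type*} [Fintype ι] [NormedAddCommGroup E]
    [InnerProductSpace ℝ E] (P : Matrix ι ι ℝ) (s : Finset κ) (x : κ → ι → E) :
    ∑ i, ‖(1 / (#s : ℝ)) • ∑ t ∈ s, x t i - ∑ j, P i j • (1 / (#s : ℝ)) • ∑ t ∈ s, x t j‖ ^ 2
      ≤ 1 / (#s : ℝ) * ∑ t ∈ s, ∑ i, ‖x t i - ∑ j, P i j • x t j‖ ^ 2 := by
  have hlin : ∀ i, (1 / (#s : ℝ)) • ∑ t ∈ s, x t i - ∑ j, P i j • (1 / (#s : ℝ)) • ∑ t ∈ s, x t j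
      = (1 / (#s : ℝ)) • ∑ t ∈ s, (x t i - ∑ j, P i j • x t j) := fun i => by
    simp only [smul_sum, smul_sub, sum_sub_distrib]
    rw [sum_comm (s := univ)]
    simp only [smul_comm (P i _) (1 / (#s : ℝ))]
  simp_rw [hlin]
  rw [sum_comm, mul_sum]
  exact sum_le_sum fun i _ => norm_inv_card_smul_sum_sq_le s _

theorem bregman_pdmm_ergodic_residual_rate_general {n m : ℕ}
    (𝒳 : Set (EuclideanSpace ℝ (Fin n)))
    (f : Fin m → EuclideanSpace ℝ (Fin n) → ℝ)
    (P : Matrix (Fin m) (Fin m) ℝ) (hPsym : P.IsSymm)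
    (hPnn : ∀ i j, 0 ≤ P i j) (hProw : ∀ i, ∑ j, P i j = 1) (hPpsd : P.PosSemidef)
    (φ : EuclideanSpace ℝ (Fin n) → ℝ)
    (hφd : Differentiable ℝ φ) (hφc : ConvexOn ℝ Set.univ φ)
    (φi : Fin m → EuclideanSpace ℝ (Fin n) → ℝ)
    (hφid : ∀ i, Differentiable ℝ (φi i)) (hφic : ∀ i, ConvexOn ℝ Set.univ (φi i))
    (μ p σ ρ τ γ : ℝ) (δ : Fin m → ℝ)
    (hμ : 0 < μ) (hp : 1 ≤ p)
    (hstrong : ∀ u ∈ 𝒳, ∀ v ∈ 𝒳, μ / 2 * lpnorm p (u - v) ^ 2 ≤ breg φ u v)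
    (hσ : σ = min 1 ((n : ℝ) ^ (2 / p - 1)))
    (hρ : 0 < ρ) (hτ : 0 < τ) (hδ : ∀ i, 0 ≤ δ i)
    (hγ0 : 0 < γ) (hτρ : τ ≤ ρ * (μ * σ - γ))
    (x y ν : ℕ → Fin m → EuclideanSpace ℝ (Fin n))
    (hxX : ∀ t i, x t i ∈ 𝒳) (hyX : ∀ t i, y t i ∈ 𝒳)
    (hmirror : ∀ t : ℕ, ∀ i, ∀ u ∈ 𝒳,
      0 ≤ ∑ j, P i j * ⟪gradient φ (y t i) - gradient φ (x t j), u - y t i⟫)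
    (hprimal : ∀ t : ℕ, ∀ i, ∃ g : EuclideanSpace ℝ (Fin n),
      (∀ v ∈ 𝒳, 0 ≤ ⟪g, x (t + 1) i - v⟫) ∧
      ∀ v, f i v ≥ f i (x (t + 1) i) +
        ⟪-ν t i + (∑ j, P i j • ν t j)
            - ρ • (gradient φ (x (t + 1) i) - gradient φ (y t i))
            - δ i • (gradient (φi i) (x (t + 1) i) - gradient (φi i) (x t i))
            - g, v - x (t + 1) i⟫)
    (hdual : ∀ t : ℕ, ∀ i, ν (t + 1) i =
      ν t i + τ • (x (t + 1) i - ∑ j, P i j • x (t + 1) j))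
    (xstar : EuclideanSpace ℝ (Fin n)) (hxstar : xstar ∈ 𝒳)
    (νstar : Fin m → EuclideanSpace ℝ (Fin n))
    (hkkt : ∀ i, ∃ g : EuclideanSpace ℝ (Fin n),
      (∀ v ∈ 𝒳, 0 ≤ ⟪g, xstar - v⟫) ∧
      ∀ v, f i v ≥ f i xstar +
        ⟪-νstar i + (∑ j, P i j • νstar j) - g, v - xstar⟫)
    (T : ℕ)
    (xbar : Fin m → EuclideanSpace ℝ (Fin n))
    (hxbar : ∀ i, xbar i = (1 / (T : ℝ)) • ∑ t ∈ Finset.Icc 1 T, x t i)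
    (V0 : ℝ)
    (hV0 : V0 =
      1 / (2 * τ * ρ) * ∑ i, ‖νstar i - ν 0 i‖ ^ 2
        + (∑ i, breg φ xstar (y 0 i))
        + ∑ i, δ i / ρ * breg (φi i) xstar (x 0 i)) :
    1 / 2 * ∑ i, ‖xbar i - ∑ j, P i j • xbar j‖ ^ 2 ≤ V0 / (γ * T) := by
  have hσ0 : 0 ≤ σ := hσ ▸ le_min zero_le_one (Real.rpow_nonneg n.cast_nonneg _)
  have hsc : ∀ u ∈ 𝒳, ∀ v ∈ 𝒳, μ * σ / 2 * ‖u - v‖ ^ 2 ≤ breg φ u v := fun u hu v hv => by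
    have hlp := hσ ▸ min_one_rpow_mul_norm_sq_le_lpnorm_sq hp (u - v)
    nlinarith [hstrong u hu v hv]
  set S : ℕ → ℝ := fun t => ∑ i, ‖x t i - ∑ j, P i j • x t j‖ ^ 2
  have hdescent : ∑ t ∈ Finset.Icc 1 T, γ / 2 * S t ≤ V0 :=
    hV0 ▸ sum_Icc_le_of_succ_add_le
      (pdmmLyapunov_nonneg hφc hφd hφic hφid hρ hτ hδ xstar νstar x y ν)
      (fun t => pdmmLyapunov_succ_add_le hPsym hPnn hProw hPpsd hφc hφd hφic hφid hρ hτ hδ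
        (by positivity) hτρ hsc (hxX (t + 1)) (hyX (t + 1)) hxstar (hmirror (t + 1))
        (hprimal t) (hdual t) hkkt) T
  have haverage := sum_norm_average_sub_sum_smul_sq_le P (Finset.Icc 1 T) x
  simp only [Nat.card_Icc, add_tsub_cancel_right, ← hxbar] at haverage
  rw [← Finset.mul_sum] at hdescent
  calc 1 / 2 * ∑ i, ‖xbar i - ∑ j, P i j • xbar j‖ ^ 2
      ≤ 1 / 2 * (1 / T * ∑ t ∈ Finset.Icc 1 T, S t) := by gcongr
    _ = γ * ((∑ t ∈ Finset.Icc 1 T, S t) / 2) / (γ * T) := by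
        rw [mul_div_mul_left _ _ hγ0.ne']
        ring
    _ ≤ V0 / (γ * T) := by
        gcongr
        linarith

/-- `O(1/T)` ergodic convergence of the consensus residual for Bregman PDMM. -/
theorem bregman_pdmm_ergodic_residual_rate {n m : ℕ}
    (𝒳 : Set (EuclideanSpace ℝ (Fin n)))
    (hXne : 𝒳.Nonempty) (hXclosed : IsClosed 𝒳) (hXconv : Convex ℝ 𝒳)
    (f : Fin m → EuclideanSpace ℝ (Fin n) → ℝ)
    (hf : ∀ i, ConvexOn ℝ Set.univ (f i))
    (P : Matrix (Fin m) (Fin m) ℝ) (hPsym : P.IsSymm)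
    (hPnn : ∀ i j, 0 ≤ P i j) (hProw : ∀ i, ∑ j, P i j = 1) (hPpsd : P.PosSemidef)
    (φ : EuclideanSpace ℝ (Fin n) → ℝ)
    (hφd : Differentiable ℝ φ) (hφc : ConvexOn ℝ Set.univ φ)
    (φi : Fin m → EuclideanSpace ℝ (Fin n) → ℝ)
    (hφid : ∀ i, Differentiable ℝ (φi i)) (hφic : ∀ i, ConvexOn ℝ Set.univ (φi i))
    (μ p σ ρ τ γ : ℝ) (δ : Fin m → ℝ)
    (hμ : 0 < μ) (hp : 1 ≤ p)
    (hstrong : ∀ u ∈ 𝒳, ∀ v ∈ 𝒳, μ / 2 * lpnorm p (u - v) ^ 2 ≤ breg φ u v)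
    (hσ : σ = min 1 ((n : ℝ) ^ (2 / p - 1)))
    (hρ : 0 < ρ) (hτ : 0 < τ) (hδ : ∀ i, 0 ≤ δ i)
    (hγ0 : 0 < γ) (hγ : γ < μ * σ) (hτρ : τ ≤ ρ * (μ * σ - γ))
    (x y ν : ℕ → Fin m → EuclideanSpace ℝ (Fin n))
    (hxX : ∀ t i, x t i ∈ 𝒳) (hyX : ∀ t i, y t i ∈ 𝒳)
    (hmirror : ∀ t : ℕ, ∀ i, ∀ u ∈ 𝒳,
      0 ≤ ∑ j, P i j * ⟪gradient φ (y t i) - gradient φ (x t j), u - y t i⟫)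
    (hprimal : ∀ t : ℕ, ∀ i, ∃ g : EuclideanSpace ℝ (Fin n),
      (∀ v ∈ 𝒳, 0 ≤ ⟪g, x (t + 1) i - v⟫) ∧
      ∀ v, f i v ≥ f i (x (t + 1) i) +
        ⟪-ν t i + (∑ j, P i j • ν t j)
            - ρ • (gradient φ (x (t + 1) i) - gradient φ (y t i))
            - δ i • (gradient (φi i) (x (t + 1) i) - gradient (φi i) (x t i))
            - g, v - x (t + 1) i⟫)
    (hdual : ∀ t : ℕ, ∀ i, ν (t + 1) i =
      ν t i + τ • (x (t + 1) i - ∑ j, P i j • x (t + 1) j))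
    (xstar : EuclideanSpace ℝ (Fin n)) (hxstar : xstar ∈ 𝒳)
    (νstar : Fin m → EuclideanSpace ℝ (Fin n))
    (hkkt : ∀ i, ∃ g : EuclideanSpace ℝ (Fin n),
      (∀ v ∈ 𝒳, 0 ≤ ⟪g, xstar - v⟫) ∧
      ∀ v, f i v ≥ f i xstar +
        ⟪-νstar i + (∑ j, P i j • νstar j) - g, v - xstar⟫)
    (T : ℕ) (hT : 1 ≤ T)
    (xbar : Fin m → EuclideanSpace ℝ (Fin n))
    (hxbar : ∀ i, xbar i = (1 / (T : ℝ)) • ∑ t ∈ Finset.Icc 1 T, x t i)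
    (V0 : ℝ)
    (hV0 : V0 =
      1 / (2 * τ * ρ) * ∑ i, ‖νstar i - ν 0 i‖ ^ 2
        + (∑ i, breg φ xstar (y 0 i))
        + ∑ i, δ i / ρ * breg (φi i) xstar (x 0 i)) :
    1 / 2 * ∑ i, ‖xbar i - ∑ j, P i j • xbar j‖ ^ 2 ≤ V0 / (γ * T) :=
  bregman_pdmm_ergodic_residual_rate_general 𝒳 f P hPsym hPnn hProw hPpsd φ hφd hφc φi hφid hφic μ p
    σ ρ τ γ δ hμ hp hstrong hσ hρ hτ hδ hγ0 hτρ x y ν hxX hyX hmirror hprimal hdual xstar hxstar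
    νstar hkkt T xbar hxbar V0 hV0
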